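/- Let m, n, t be positive integers and let {Ψ_{j1}, …, Ψ_{j(mn)}}, j = 1, …, t, be t mutually unbiased orthonormal bases of the real Hilbert space ℝ^m ⊗ ℝ^n ≅ ℝ^(mn). Then Σ_{j=1}^{t} Σ_{i=1}^{mn} P(Tr_A(Ψ_{ji} Ψ_{ji}^t)) ≤ (m(m+1)/2 + t − 1)·n. -/

import Mathlib

open Matrix Finset

/-- Left partial trace: trace out the first (A) factor. -/
noncomputable def trA {m n : ℕ} (X : Matrix (Fin m × Fin n) (Fin m × Fin n) ℝ) :
    Matrix (Fin n) (Fin n) ℝ :=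
  Matrix.of fun j j' => ∑ i : Fin m, X (i, j) (i, j')

/-!
For a unit vector `ψ = Σ Ψᵢⱼ eᵢ ⊗ fⱼ` the partial traces of `ψψᵗ` are `Tr_A = ΨᵗΨ` and
`Tr_B = ΨΨᵗ`, which have the same purity. Put `Qψ = ψψᵗ - 1/(mn)` and let
`S_{ii'} = (E_{ii'} + E_{i'i})/2 - δ_{ii'}/m` be the traceless symmetrised matrix units.
Then `(ΨΨᵗ)_{ii'} = ⟨Qψ, S_{ii'} ⊗ 1⟩ + δ_{ii'}/m` in the Frobenius inner product, so the purity
is `Σ_{i,i'} ⟨Qψ, S_{ii'} ⊗ 1⟩² + 1/m`.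

Orthonormality and mutual unbiasedness give `⟨Qψ, Qφ⟩ = ⟨ψ, φ⟩² - 1/(mn)`, so the Gram matrix of
the family `Qψ` is block diagonal with blocks `I - J/(mn) ≤ I`. A family with such a Gram matrix
satisfies Bessel's inequality `Σ_ψ ⟨Qψ, Z⟩² ≤ ‖Z‖²`. Taking `Z = S_{ii'} ⊗ 1`, with
`‖S_{ii'} ⊗ 1‖² = n/2` for `i ≠ i'` and `n (1 - 1/m)` for `i = i'`, and summing over `i, i'` gives
`(m(m+1)/2 - 1) n`, plus `t n` from the constant terms.
-/

open scoped RealInnerProductSpace Kronecker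

theorem sum_inner_sq_le_of_norm_sum_smul_sq_le {ι E : Type*} [Fintype ι]
    [NormedAddCommGroup E] [InnerProductSpace ℝ E] {q : ι → E}
    (hq : ∀ c : ι → ℝ, ‖∑ p, c p • q p‖ ^ 2 ≤ ∑ p, c p ^ 2) (z : E) :
    ∑ p, ⟪q p, z⟫ ^ 2 ≤ ‖z‖ ^ 2 := by
  set w := ∑ p, ⟪q p, z⟫ • q p
  have hzw : ⟪z, w⟫ = ∑ p, ⟪q p, z⟫ ^ 2 := by
    simp only [w, inner_sum, real_inner_smul_right, real_inner_comm z, sq]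
  nlinarith [norm_sub_sq_real z w, sq_nonneg ‖z - w‖, hq fun p => ⟪q p, z⟫]

theorem norm_sum_smul_sq_le_of_inner_eq {ι κ E : Type*} [Fintype ι] [Fintype κ]
    [DecidableEq ι] [DecidableEq κ] [NormedAddCommGroup E] [InnerProductSpace ℝ E]
    {q : ι × κ → E} {r : ℝ} (hr : 0 ≤ r)
    (hq : ∀ p p', ⟪q p, q p'⟫ = if p.1 = p'.1 then (if p.2 = p'.2 then 1 else 0) - r else 0)
    (c : ι × κ → ℝ) : ‖∑ p, c p • q p‖ ^ 2 ≤ ∑ p, c p ^ 2 := by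
  have hblock : ∀ j, ∑ i, ∑ i', c (j, i) * c (j, i') * ((if i' = i then 1 else 0) - r)
      = ∑ i, c (j, i) ^ 2 - r * (∑ i, c (j, i)) ^ 2 := by
    intro j
    simp only [mul_sub, mul_ite, mul_one, mul_zero, sum_sub_distrib, sum_ite_eq',
      mem_univ, if_true, sq]
    simp only [← sum_mul, ← mul_sum]
    ring
  calc ‖∑ p, c p • q p‖ ^ 2
      = ∑ j, ∑ i, ∑ i', c (j, i) * c (j, i') * ((if i' = i then 1 else 0) - r) := by
        rw [← real_inner_self_eq_norm_sq]
        simp only [sum_inner, inner_sum, real_inner_smul_left, real_inner_smul_right, hq,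
          Fintype.sum_prod_type, mul_ite, mul_zero, sum_ite_irrel, sum_const_zero,
          sum_ite_eq', mem_univ, if_true, mul_assoc]
    _ ≤ ∑ p, c p ^ 2 := by
        rw [Fintype.sum_prod_type]
        refine sum_le_sum fun j _ => ?_
        rw [hblock]
        nlinarith [sq_nonneg (∑ i, c (j, i))]

/-- A matrix as a vector of Euclidean space, whose inner product is then the Frobenius one. -/
noncomputable def frobVec {α β : Type*} [Fintype α] [Fintype β] :
    Matrix α β ℝ →ₗ[ℝ] EuclideanSpace ℝ (α × β) where
  toFun X := WithLp.toLp 2 fun p => X p.1 p.2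
  map_add' _ _ := rfl
  map_smul' _ _ := rfl

section Frobenius

variable {α β : Type*} [Fintype α] [Fintype β]

@[simp]
theorem frobVec_apply (X : Matrix α β ℝ) (p : α × β) : frobVec X p = X p.1 p.2 := rfl

theorem inner_frobVec (X Y : Matrix α β ℝ) :
    ⟪frobVec X, frobVec Y⟫ = ∑ a, ∑ b, X a b * Y a b := by
  simp [PiLp.inner_apply, Fintype.sum_prod_type, mul_comm]

theorem inner_frobVec_single [DecidableEq α] [DecidableEq β] (X : Matrix α β ℝ) (a : α) (b : β)
    (c : ℝ) : ⟪frobVec X, frobVec (single a b c)⟫ = X a b * c := by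
  simp [inner_frobVec, single_apply, ite_and]

theorem inner_frobVec_one [DecidableEq α] (X : Matrix α α ℝ) :
    ⟪frobVec X, frobVec 1⟫ = X.trace := by
  simp [inner_frobVec, one_apply, trace]

theorem inner_frobVec_vecMulVec (ψ φ : α → ℝ) :
    ⟪frobVec (vecMulVec ψ ψ), frobVec (vecMulVec φ φ)⟫ = (ψ ⬝ᵥ φ) ^ 2 := by
  simp only [inner_frobVec, vecMulVec_apply, sq, dotProduct, sum_mul_sum]
  exact sum_congr rfl fun _ _ => sum_congr rfl fun _ _ => by ring

end Frobenius

def partialTraceRight {ι κ : Type*} [Fintype κ] (X : Matrix (ι × κ) (ι × κ) ℝ) :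
    Matrix ι ι ℝ :=
  of fun i i' => ∑ k, X (i, k) (i', k)

section PartialTrace

variable {ι κ : Type*} [Fintype ι] [Fintype κ]

theorem trace_partialTraceRight (X : Matrix (ι × κ) (ι × κ) ℝ) :
    (partialTraceRight X).trace = X.trace := by
  simp [partialTraceRight, trace, Fintype.sum_prod_type]

variable [DecidableEq κ]

theorem inner_frobVec_kronecker_one (X : Matrix (ι × κ) (ι × κ) ℝ) (A : Matrix ι ι ℝ) :
    ⟪frobVec X, frobVec (A ⊗ₖ (1 : Matrix κ κ ℝ))⟫ =
      ⟪frobVec (partialTraceRight X), frobVec A⟫ := by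
  simp only [inner_frobVec, kroneckerMap_apply, one_apply, mul_ite, mul_one, mul_zero,
    Fintype.sum_prod_type, sum_ite_eq, mem_univ, if_true, partialTraceRight, of_apply, sum_mul]
  exact sum_congr rfl fun _ _ => sum_comm

omit [Fintype ι] in
theorem partialTraceRight_kronecker_one (A : Matrix ι ι ℝ) :
    partialTraceRight (A ⊗ₖ (1 : Matrix κ κ ℝ)) = (Fintype.card κ : ℝ) • A := by
  ext; simp [partialTraceRight, one_apply]

theorem norm_frobVec_kronecker_one_sq (A : Matrix ι ι ℝ) :
    ‖frobVec (A ⊗ₖ (1 : Matrix κ κ ℝ))‖ ^ 2 = Fintype.card κ * ‖frobVec A‖ ^ 2 := by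
  rw [← real_inner_self_eq_norm_sq, inner_frobVec_kronecker_one, partialTraceRight_kronecker_one,
    map_smul, real_inner_smul_left, real_inner_self_eq_norm_sq]

end PartialTrace

theorem trace_trA_vecMulVec_sq {m n : ℕ} (ψ : Fin m × Fin n → ℝ) :
    trace (trA (vecMulVec ψ ψ) ^ 2) = ‖frobVec (partialTraceRight (vecMulVec ψ ψ))‖ ^ 2 := by
  set Ψ : Matrix (Fin m) (Fin n) ℝ := of fun i j => ψ (i, j)
  have hA : trA (vecMulVec ψ ψ) = Ψᵀ * Ψ := by
    ext; simp [Ψ, trA, mul_apply, vecMulVec_apply]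
  have hB : partialTraceRight (vecMulVec ψ ψ) = Ψ * Ψᵀ := by
    ext; simp [Ψ, partialTraceRight, mul_apply, vecMulVec_apply]
  have hcycle : trace ((Ψᵀ * Ψ) ^ 2) = trace (Ψ * Ψᵀ * (Ψ * Ψᵀ)ᵀ) := by
    rw [sq, transpose_mul, transpose_transpose, Matrix.mul_assoc, trace_mul_comm]
    simp only [Matrix.mul_assoc]
  rw [hA, hB, hcycle, ← real_inner_self_eq_norm_sq, inner_frobVec]
  rfl

section TracelessSymm

variable {ι : Type*} [Fintype ι] [DecidableEq ι]

noncomputable def tracelessSymmUnit (i i' : ι) : Matrix ι ι ℝ :=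
  (2⁻¹ : ℝ) • (single i i' 1 + single i' i 1) -
    (if i = i' then (Fintype.card ι : ℝ)⁻¹ else 0) • 1

theorem inner_frobVec_tracelessSymmUnit (M : Matrix ι ι ℝ) (i i' : ι) :
    ⟪frobVec M, frobVec (tracelessSymmUnit i i')⟫ =
      (M i i' + M i' i) / 2 - if i = i' then M.trace / Fintype.card ι else 0 := by
  simp only [tracelessSymmUnit, map_sub, map_smul, map_add, inner_sub_right,
    real_inner_smul_right, inner_add_right, inner_frobVec_single, inner_frobVec_one]
  split_ifs <;> ring

theorem trace_tracelessSymmUnit (i i' : ι) : (tracelessSymmUnit i i').trace = 0 := by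
  have : Nonempty ι := ⟨i⟩
  have hcard : (Fintype.card ι : ℝ) ≠ 0 := Nat.cast_ne_zero.mpr Fintype.card_ne_zero
  by_cases h : i = i'
  · subst h
    norm_num [tracelessSymmUnit, hcard]
  · simp [tracelessSymmUnit, h, Ne.symm h]

theorem norm_frobVec_tracelessSymmUnit_sq (i i' : ι) :
    ‖frobVec (tracelessSymmUnit i i')‖ ^ 2 =
      if i = i' then 1 - (Fintype.card ι : ℝ)⁻¹ else 2⁻¹ := by
  rw [← real_inner_self_eq_norm_sq, inner_frobVec_tracelessSymmUnit, trace_tracelessSymmUnit]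
  by_cases h : i = i'
  · subst h
    norm_num [tracelessSymmUnit]
  · simp [tracelessSymmUnit, h, Ne.symm h]

theorem sum_norm_frobVec_tracelessSymmUnit_sq [Nonempty ι] :
    ∑ i : ι, ∑ i' : ι, ‖frobVec (tracelessSymmUnit i i')‖ ^ 2 =
      (Fintype.card ι : ℝ) * (Fintype.card ι + 1) / 2 - 1 := by
  have hcard : (Fintype.card ι : ℝ) ≠ 0 := Nat.cast_ne_zero.mpr Fintype.card_ne_zero
  have hsplit : ∀ i i' : ι, (if i = i' then 1 - (Fintype.card ι : ℝ)⁻¹ else 2⁻¹) =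
      2⁻¹ + if i = i' then 2⁻¹ - (Fintype.card ι : ℝ)⁻¹ else 0 := by
    intro i i'; split_ifs <;> ring
  simp only [norm_frobVec_tracelessSymmUnit_sq, hsplit, sum_add_distrib, sum_ite_eq, mem_univ,
    if_true, sum_const, card_univ, nsmul_eq_mul]
  field_simp
  ring

theorem norm_frobVec_sq_eq_sum_inner_tracelessSymmUnit_sq {M : Matrix ι ι ℝ} (hM : M.IsSymm) :
    ‖frobVec M‖ ^ 2 = ∑ i, ∑ i', ⟪frobVec M, frobVec (tracelessSymmUnit i i')⟫ ^ 2 +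
      M.trace ^ 2 / Fintype.card ι := by
  have hterm : ∀ i i', ⟪frobVec M, frobVec (tracelessSymmUnit i i')⟫ ^ 2 = M i i' ^ 2 -
      if i = i' then 2 * (M.trace / Fintype.card ι) * M i i - (M.trace / Fintype.card ι) ^ 2
      else 0 := by
    intro i i'
    rw [inner_frobVec_tracelessSymmUnit, hM.apply i' i]
    split_ifs with h
    · subst h; ring
    · ring
  have hc : (Fintype.card ι : ℝ) * (M.trace / Fintype.card ι) ^ 2 =
      M.trace ^ 2 / Fintype.card ι := by
    rcases eq_or_ne (Fintype.card ι : ℝ) 0 with h | h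
    · simp [h]
    · field_simp
  simp only [hterm, sum_sub_distrib, sum_ite_eq, mem_univ, if_true, sum_const, card_univ,
    nsmul_eq_mul, ← mul_sum]
  rw [← real_inner_self_eq_norm_sq, inner_frobVec, show ∑ i, M i i = M.trace from rfl, hc]
  simp only [sq]
  ring

end TracelessSymm

section TracelessProjector

variable {α : Type*} [Fintype α] [DecidableEq α]

noncomputable def tracelessProjector (ψ : α → ℝ) : Matrix α α ℝ :=
  vecMulVec ψ ψ - (Fintype.card α : ℝ)⁻¹ • 1

theorem inner_frobVec_tracelessProjector {ψ φ : α → ℝ} (hψ : ψ ⬝ᵥ ψ = 1) (hφ : φ ⬝ᵥ φ = 1) :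
    ⟪frobVec (tracelessProjector ψ), frobVec (tracelessProjector φ)⟫ =
      (ψ ⬝ᵥ φ) ^ 2 - (Fintype.card α : ℝ)⁻¹ := by
  simp only [tracelessProjector, map_sub, map_smul, inner_sub_left, inner_sub_right,
    real_inner_smul_left, real_inner_smul_right, inner_frobVec_vecMulVec, inner_frobVec_one,
    real_inner_comm _ (frobVec 1), trace_vecMulVec, trace_one, hψ, hφ]
  have := mul_inv_mul_cancel (Fintype.card α : ℝ)⁻¹
  rw [inv_inv] at this
  linear_combination this

theorem inner_frobVec_tracelessProjector_of_trace_eq_zero (ψ : α → ℝ) {X : Matrix α α ℝ}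
    (hX : X.trace = 0) :
    ⟪frobVec (tracelessProjector ψ), frobVec X⟫ = ⟪frobVec (vecMulVec ψ ψ), frobVec X⟫ := by
  rw [tracelessProjector, map_sub, map_smul, inner_sub_left, real_inner_smul_left,
    real_inner_comm _ (frobVec 1), inner_frobVec_one, hX, mul_zero, sub_zero]

theorem inner_frobVec_tracelessProjector_of_unbiased {ι κ : Type*} [DecidableEq ι]
    [DecidableEq κ] {Ψ : ι → κ → α → ℝ}
    (horth : ∀ j i i', Ψ j i ⬝ᵥ Ψ j i' = if i = i' then 1 else 0)
    (hmub : ∀ j j', j ≠ j' → ∀ i i', |Ψ j i ⬝ᵥ Ψ j' i'| = 1 / √(Fintype.card α))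
    (p p' : ι × κ) :
    ⟪frobVec (tracelessProjector (Ψ p.1 p.2)), frobVec (tracelessProjector (Ψ p'.1 p'.2))⟫ =
      if p.1 = p'.1 then (if p.2 = p'.2 then 1 else 0) - (Fintype.card α : ℝ)⁻¹ else 0 := by
  obtain ⟨j, i⟩ := p
  obtain ⟨j', i'⟩ := p'
  have hunit : ∀ j i, Ψ j i ⬝ᵥ Ψ j i = 1 := fun j i => (horth j i i).trans (if_pos rfl)
  rw [inner_frobVec_tracelessProjector (hunit _ _) (hunit _ _)]
  by_cases hj : j = j'
  · subst hj
    rw [if_pos rfl, horth]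
    split_ifs <;> simp
  · rw [if_neg hj, ← sq_abs, hmub j j' hj i i', div_pow, one_pow, Real.sq_sqrt (by positivity),
      one_div, sub_self]

end TracelessProjector

theorem trace_trA_vecMulVec_sq_eq_sum_inner_sq {m n : ℕ} {ψ : Fin m × Fin n → ℝ}
    (hψ : ψ ⬝ᵥ ψ = 1) :
    trace (trA (vecMulVec ψ ψ) ^ 2) =
      ∑ i, ∑ i', ⟪frobVec (tracelessProjector ψ),
        frobVec (tracelessSymmUnit i i' ⊗ₖ (1 : Matrix (Fin n) (Fin n) ℝ))⟫ ^ 2 + (m : ℝ)⁻¹ := by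
  have hsymm : (partialTraceRight (vecMulVec ψ ψ)).IsSymm :=
    IsSymm.ext fun i i' => by simp [partialTraceRight, vecMulVec_apply, mul_comm]
  rw [trace_trA_vecMulVec_sq, norm_frobVec_sq_eq_sum_inner_tracelessSymmUnit_sq hsymm,
    trace_partialTraceRight, trace_vecMulVec, hψ]
  have htrace : ∀ i i' : Fin m,
      (tracelessSymmUnit i i' ⊗ₖ (1 : Matrix (Fin n) (Fin n) ℝ)).trace = 0 := fun i i' => by
    rw [trace_kronecker, trace_tracelessSymmUnit, zero_mul]
  simp only [inner_frobVec_tracelessProjector_of_trace_eq_zero _ (htrace _ _)]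
  simp only [inner_frobVec_kronecker_one, one_pow, Fintype.card_fin, one_div]

theorem mub_purity_bound_real_general (m n t : ℕ) (hm : 0 < m)
    (Ψ : Fin t → Fin (m * n) → (Fin m × Fin n) → ℝ)
    (horth : ∀ j, ∀ i i' : Fin (m * n),
      (∑ a, Ψ j i a * Ψ j i' a) = if i = i' then 1 else 0)
    (hmub : ∀ j j', j ≠ j' → ∀ i i' : Fin (m * n),
      |∑ a, Ψ j i a * Ψ j' i' a| = 1 / Real.sqrt (m * n)) :
    ∑ j : Fin t, ∑ i : Fin (m * n),
        Matrix.trace (trA (Matrix.vecMulVec (Ψ j i) (Ψ j i)) ^ 2)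
      ≤ ((m : ℝ) * (m + 1) / 2 + (t : ℝ) - 1) * n := by
  have : NeZero m := ⟨hm.ne'⟩
  have hgram := inner_frobVec_tracelessProjector_of_unbiased horth
    (by simp only [Fintype.card_prod, Fintype.card_fin, Nat.cast_mul]; exact hmub)
  set q := fun p : Fin t × Fin (m * n) => frobVec (tracelessProjector (Ψ p.1 p.2))
  set Z := fun i i' : Fin m => frobVec (tracelessSymmUnit i i' ⊗ₖ (1 : Matrix (Fin n) (Fin n) ℝ))
  have hbessel : ∀ i i', ∑ p, ⟪q p, Z i i'⟫ ^ 2 ≤ ‖Z i i'‖ ^ 2 := fun i i' =>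
    sum_inner_sq_le_of_norm_sum_smul_sq_le
      (norm_sum_smul_sq_le_of_inner_eq (by positivity) hgram) _
  calc ∑ j, ∑ i, trace (trA (vecMulVec (Ψ j i) (Ψ j i)) ^ 2)
      = ∑ p, (∑ k, ∑ k', ⟪q p, Z k k'⟫ ^ 2 + (m : ℝ)⁻¹) := by
        rw [← Fintype.sum_prod_type']
        exact sum_congr rfl fun p _ =>
          trace_trA_vecMulVec_sq_eq_sum_inner_sq ((horth _ _ _).trans (if_pos rfl))
    _ = ∑ k, ∑ k', ∑ p, ⟪q p, Z k k'⟫ ^ 2 + t * n := by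
        rw [sum_add_distrib, sum_comm, sum_congr rfl fun k _ => sum_comm, sum_const, card_univ,
          Fintype.card_prod, Fintype.card_fin, Fintype.card_fin, nsmul_eq_mul]
        push_cast
        field_simp
    _ ≤ ∑ k, ∑ k', ‖Z k k'‖ ^ 2 + t * n := by gcongr with k _ k' _; exact hbessel k k'
    _ = ((m : ℝ) * (m + 1) / 2 + (t : ℝ) - 1) * n := by
        simp only [Z, norm_frobVec_kronecker_one_sq, ← mul_sum,
          sum_norm_frobVec_tracelessSymmUnit_sq, Fintype.card_fin]
        ring

theorem mub_purity_bound_real (m n t : ℕ) (hm : 0 < m) (hn : 0 < n) (ht : 0 < t)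
    (Ψ : Fin t → Fin (m * n) → (Fin m × Fin n) → ℝ)
    (horth : ∀ j, ∀ i i' : Fin (m * n),
      (∑ a, Ψ j i a * Ψ j i' a) = if i = i' then 1 else 0)
    (hmub : ∀ j j', j ≠ j' → ∀ i i' : Fin (m * n),
      |∑ a, Ψ j i a * Ψ j' i' a| = 1 / Real.sqrt (m * n)) :
    ∑ j : Fin t, ∑ i : Fin (m * n),
        Matrix.trace (trA (Matrix.vecMulVec (Ψ j i) (Ψ j i)) ^ 2)
      ≤ ((m : ℝ) * (m + 1) / 2 + (t : ℝ) - 1) * n :=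
  mub_purity_bound_real_general m n t hm Ψ horth hmub
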